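/- Suppose a signal f : ℤ_N × ℤ_T → ℂ has more than T·(2S-1)/(2S) of its rows fully recovered, where S ≥ max_{t} |supp_n(G̃f(t,·))| and G̃f(t,n) is the column-wise Gabor (Fourier) transform of column t. Then for every column t, the number of missing values in that column times |supp_n(G̃f(t,·))| is strictly less than T/2, so each column can be uniquely recovered by the Donoho–Stark criterion applied to ℤ_T. -/

import Mathlib

open scoped BigOperators Classical
noncomputable section

/-- One-dimensional DFT on ℤ_T with unitary normalization. -/
def dft1 (T : ℕ) [NeZero T] (f : ZMod T → ℂ) : ZMod T → ℂ :=
  fun n => ((1 / Real.sqrt T : ℝ) : ℂ) *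
    ∑ a : ZMod T, f a *
      Complex.exp (-2 * Real.pi * Complex.I * (((n.val * a.val : ℕ) : ℂ) / (T : ℂ)))

/-- Column-wise Gabor transform: `G̃f(t,n)` is the DFT of the `t`-th column of `f`. -/
def colGabor (N T : ℕ) [NeZero N] [NeZero T] (f : ZMod N × ZMod T → ℂ)
    (t : ZMod N) : ZMod T → ℂ :=
  dft1 T (fun a => f (t, a))

/-!
Subtracting two candidate columns gives a signal supported on the missing entries whose
Fourier support has at most twice the column's size. The discrete uncertainty principle
`N ≤ |supp Φ| · |supp 𝓕 Φ|` (the sup norm of `𝓕 Φ` is at most `|supp Φ|` times that of `Φ`,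
and Fourier inversion gives the reverse bound with a factor `N`) forces it to vanish as soon as
`|missing| · |supp 𝓕 f| < N / 2`. This holds in every column because a column has at most
`T - #(recovered rows) < T / (2S)` missing entries.
-/

open ZMod Finset

lemma exp_eq_stdAddChar (T : ℕ) [NeZero T] (n a : ZMod T) :
    Complex.exp (-2 * Real.pi * Complex.I * (((n.val * a.val : ℕ) : ℂ) / (T : ℂ))) =
      stdAddChar (-(a * n)) := by
  have h : ((-((n.val : ℤ) * (a.val : ℤ)) : ℤ) : ZMod T) = -(a * n) := by
    push_cast
    rw [ZMod.natCast_val, ZMod.natCast_val, ZMod.cast_id, ZMod.cast_id]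
    ring
  rw [← h, ZMod.stdAddChar_coe]
  congr 1
  push_cast
  ring

lemma dft1_eq_smul_dft (T : ℕ) [NeZero T] (Φ : ZMod T → ℂ) :
    dft1 T Φ = ((1 / Real.sqrt T : ℝ) : ℂ) • 𝓕 Φ := by
  ext n
  rw [dft1, Pi.smul_apply, dft_apply, smul_eq_mul]
  congr 1
  refine sum_congr rfl fun a _ => ?_
  rw [exp_eq_stdAddChar, smul_eq_mul, mul_comm]

lemma dft1_ne_zero_iff (T : ℕ) [NeZero T] (Φ : ZMod T → ℂ) (n : ZMod T) :
    dft1 T Φ n ≠ 0 ↔ 𝓕 Φ n ≠ 0 := by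
  have hT : Real.sqrt T ≠ 0 := (Real.sqrt_pos.2 (Nat.cast_pos.2 (NeZero.pos T))).ne'
  simp [dft1_eq_smul_dft, hT]

section Uncertainty

variable {N : ℕ} [NeZero N] {E : Type*} [NormedAddCommGroup E] [NormedSpace ℂ E]

lemma norm_dft_le_card_support_mul (Φ : ZMod N → E) {C : ℝ} (hC : ∀ j, ‖Φ j‖ ≤ C)
    (k : ZMod N) : ‖𝓕 Φ k‖ ≤ #{j | Φ j ≠ 0} * C := by
  rw [dft_apply, ← sum_filter_of_ne (p := fun j => Φ j ≠ 0) fun j _ h hj => by simp [hj] at h]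
  calc ‖∑ j with Φ j ≠ 0, stdAddChar (-(j * k)) • Φ j‖
      ≤ ∑ j with Φ j ≠ 0, ‖stdAddChar (-(j * k)) • Φ j‖ := norm_sum_le _ _
    _ ≤ #{j | Φ j ≠ 0} • C := sum_le_card_nsmul _ _ _ fun j _ => by
        simpa [norm_smul, stdAddChar_apply, Circle.norm_coe] using hC j
    _ = #{j | Φ j ≠ 0} * C := nsmul_eq_mul _ _

/-- The Donoho–Stark uncertainty principle on `ℤ_N`. -/
theorem le_card_support_mul_card_dft_support {Φ : ZMod N → E} (hΦ : Φ ≠ 0) :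
    N ≤ #{j | Φ j ≠ 0} * #{k | 𝓕 Φ k ≠ 0} := by
  obtain ⟨a, -, ha⟩ := exists_max_image univ (fun j => ‖Φ j‖) univ_nonempty
  obtain ⟨k, -, hk⟩ := exists_max_image univ (fun k => ‖𝓕 Φ k‖) univ_nonempty
  have hpos : 0 < ‖Φ a‖ := by
    obtain ⟨j, hj⟩ := Function.ne_iff.1 hΦ
    exact (norm_pos_iff.2 hj).trans_le (ha j (mem_univ j))
  have hinv : (N : ℝ) * ‖Φ a‖ ≤ #{k | 𝓕 Φ k ≠ 0} * ‖𝓕 Φ k‖ := by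
    have h := norm_dft_le_card_support_mul (𝓕 Φ) (fun j => hk j (mem_univ j)) (-a)
    simpa [dft_dft, norm_smul] using h
  have hdir := norm_dft_le_card_support_mul Φ (fun j => ha j (mem_univ j)) k
  have : (N : ℝ) * ‖Φ a‖ ≤ (#{j | Φ j ≠ 0} * #{k | 𝓕 Φ k ≠ 0} : ℕ) * ‖Φ a‖ := by
    push_cast
    nlinarith
  exact_mod_cast le_of_mul_le_mul_right this hpos

/-- The Donoho–Stark unique recovery criterion. -/
theorem eq_of_eq_off_of_card_mul_card_dft_support_lt {f g : ZMod N → E} (D : Finset (ZMod N))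
    (hfg : ∀ a ∉ D, g a = f a) (hg : #{k | 𝓕 g k ≠ 0} ≤ #{k | 𝓕 f k ≠ 0})
    (hD : (#D : ℝ) * #{k | 𝓕 f k ≠ 0} < N / 2) : g = f := by
  by_contra hne
  have hsupp : #{j | (g - f) j ≠ 0} ≤ #D := card_le_card fun j hj => by
    by_contra hjD
    simp [hfg j hjD] at hj
  have hdft_supp : #{k | 𝓕 (g - f) k ≠ 0} ≤ 2 * #{k | 𝓕 f k ≠ 0} := calc
    _ ≤ #(({k | 𝓕 g k ≠ 0} : Finset _) ∪ ({k | 𝓕 f k ≠ 0} : Finset _)) := card_le_card fun k hk => by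
        contrapose! hk
        simp_all [map_sub]
    _ ≤ 2 * #{k | 𝓕 f k ≠ 0} := by grind [card_union_le]
  have key := le_card_support_mul_card_dft_support (sub_ne_zero.2 hne)
  have : (N : ℝ) ≤ #D * (2 * #{k | 𝓕 f k ≠ 0}) := by
    exact_mod_cast key.trans (Nat.mul_le_mul hsupp hdft_supp)
  linarith

end Uncertainty

lemma card_filter_fst_add_card_clean_le {α β : Type*} [Fintype α] [Fintype β]
    [DecidableEq α] [DecidableEq β] (M : Finset (α × β)) (t : α) :
    #(M.filter fun p => p.1 = t) + #{b | ∀ a, (a, b) ∉ M} ≤ Fintype.card β := by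
  have hinj : Set.InjOn Prod.snd ((M.filter fun p => p.1 = t : Finset (α × β)) : Set (α × β)) :=
    fun p hp q hq hpq => Prod.ext ((mem_filter.1 hp).2.trans (mem_filter.1 hq).2.symm) hpq
  rw [← card_image_of_injOn hinj, ← card_union_of_disjoint]
  · exact card_le_univ _
  · refine disjoint_left.2 fun b hb hclean => ?_
    obtain ⟨p, hp, rfl⟩ := mem_image.1 hb
    exact (mem_filter.1 hclean).2 p.1 (mem_filter.1 hp).1

/-- If more than `T(2S-1)/(2S)` of the rows of `f : ℤ_N × ℤ_T → ℂ` are fully recovered,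
where `S` bounds the column-wise Fourier support sizes, then in every column the number
of missing values times the column Fourier support size is `< T/2`, so each column is
uniquely recovered by the Donoho–Stark criterion on ℤ_T. -/
theorem column_repair (N T : ℕ) [NeZero N] [NeZero T]
    (f : ZMod N × ZMod T → ℂ) (M : Finset (ZMod N × ZMod T)) (S : ℕ) (hS : 0 < S)
    (hSbound : ∀ t : ZMod N,
      (Finset.univ.filter fun n : ZMod T => colGabor N T f t n ≠ 0).card ≤ S)
    (hrows : ((Finset.univ.filter fun a : ZMod T =>
        ∀ t : ZMod N, (t, a) ∉ M).card : ℝ) >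
      (T : ℝ) * (2 * S - 1) / (2 * S)) :
    ∀ t : ZMod N,
      ((M.filter fun p => p.1 = t).card : ℝ) *
          ((Finset.univ.filter fun n : ZMod T => colGabor N T f t n ≠ 0).card : ℝ) <
        (T : ℝ) / 2 ∧
      ∀ g : ZMod T → ℂ,
        (Finset.univ.filter fun n : ZMod T => dft1 T g n ≠ 0).card ≤
          (Finset.univ.filter fun n : ZMod T => colGabor N T f t n ≠ 0).card →
        (∀ a : ZMod T, (t, a) ∉ M → g a = f (t, a)) →
        ∀ a : ZMod T, g a = f (t, a) := by
  intro t
  simp only [colGabor, dft1_ne_zero_iff] at hSbound ⊢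
  set column := M.filter fun p => p.1 = t
  set s := #{n | 𝓕 (fun a => f (t, a)) n ≠ 0}
  have hcount : (#column : ℝ) + #{a | ∀ t, (t, a) ∉ M} ≤ T := by
    exact_mod_cast (card_filter_fst_add_card_clean_le M t).trans_eq (ZMod.card T)
  have hS' : (0 : ℝ) < S := by exact_mod_cast hS
  have hcolumn : (#column : ℝ) < T / (2 * S) := by
    have : (T : ℝ) * (2 * S - 1) / (2 * S) = T - T / (2 * S) := by field_simp
    linarith
  have hmissing : (#column : ℝ) * s < T / 2 := calc
    (#column : ℝ) * s ≤ #column * S := by gcongr; exact_mod_cast hSbound t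
    _ < T / (2 * S) * S := by gcongr
    _ = T / 2 := by field_simp
  refine ⟨hmissing, fun g hg hfg => congrFun ?_⟩
  refine eq_of_eq_off_of_card_mul_card_dft_support_lt (column.image Prod.snd) (fun a ha => ?_) hg
    (lt_of_le_of_lt (by gcongr; exact_mod_cast card_image_le) hmissing)
  exact hfg a fun hM => ha (mem_image.2 ⟨(t, a), mem_filter.2 ⟨hM, rfl⟩, rfl⟩)
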